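/- arXiv:1004.1864 — 3 statements merged into one kernel-verified Lean document; each statement's English description precedes it below -/
import Mathlib

section
/- Suppose a group membership-change election is held among a finite set B of backup replicas with an injective precedence function prec : B → ℕ. A subset P ⊆ B of replicas each propose themselves as new primary, where a proposer ℓ proposes the membership M(ℓ) = { r ∈ B : prec(ℓ) ≤ prec(r) }. Acknowledgments are modeled by a relation ack on replicas satisfying: for all ℓ, ℓ' ∈ P, if prec(ℓ') < prec(ℓ) then ¬ack(ℓ, ℓ'). A proposal by ℓ ∈ P commits when every replica in M(ℓ) acknowledges ℓ. Then at most one proposal commits: if the proposals of ℓ and ℓ' both commit, then ℓ = ℓ'. Hence each primary view has a single primary replica. -/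
/-- In an LLFT membership-change election among a finite set `B` of
backups with injective precedence `prec`, where each proposer `ℓ ∈ P` proposes the
membership `M(ℓ) = {r ∈ B | prec ℓ ≤ prec r}`, where no proposer acknowledges a
proposal by a leader of strictly smaller precedence, and where a proposal commits
when every member of the proposed membership acknowledges it: at most one proposal
commits, i.e., each primary view has a single primary replica. -/
theorem at_most_one_committed_primary {α : Type*}
    (B P : Finset α) (prec : α → ℕ) (ack : α → α → Prop)
    (hPB : P ⊆ B)
    (hinj : Set.InjOn prec (B : Set α))
    (hrule : ∀ ℓ ∈ P, ∀ ℓ' ∈ P, prec ℓ' < prec ℓ → ¬ ack ℓ ℓ')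
    (ℓ ℓ' : α) (hℓ : ℓ ∈ P) (hℓ' : ℓ' ∈ P)
    (hcommit : ∀ r ∈ B, prec ℓ ≤ prec r → ack r ℓ)
    (hcommit' : ∀ r ∈ B, prec ℓ' ≤ prec r → ack r ℓ') :
    ℓ = ℓ' := by
  have heq : prec ℓ = prec ℓ' := by
    rcases lt_trichotomy (prec ℓ) (prec ℓ') with h | h | h
    · exact absurd (hcommit ℓ' (hPB hℓ') h.le) (hrule ℓ' hℓ' ℓ hℓ h)
    · exact h
    · exact absurd (hcommit' ℓ (hPB hℓ) h.le) (hrule ℓ hℓ ℓ' hℓ' h)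
  exact hinj (hPB hℓ) (hPB hℓ') heq
end

section
/- Let ops : ℕ → List α assign to each primary view number the group's (primary's) operation sequence in that view, and let rops : ℕ → List α assign to each view the operation sequence performed by a particular replica. Suppose i < k and: (i) rops i is a suffix of ops i (the replica joined during view i and reached virtual synchrony at the start of view i+1); (ii) rops j = ops j for every j with i < j < k (the replica was a member throughout the intermediate views); and (iii) rops k is a prefix of ops k (the replica became faulty during view k). Then for every m ≤ i and every n ≥ k, the concatenation rops i ++ rops (i+1) ++ ⋯ ++ rops k is an infix (contiguous subsequence) of the concatenation ops m ++ ops (m+1) ++ ⋯ ++ ops n. -/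
/-- Theorem 3, Safety, semi-active replication: if a replica joins
in view `i` (performing a suffix of the primary's operations in view `i`),
performs exactly the primary's operations in all intermediate views, and becomes
faulty in view `k` (performing a prefix of the primary's operations in view `k`),
then its concatenated operation sequence over views `i..k` is an infix of the
group's concatenated operation sequence over any window `m..n` with
`m ≤ i` and `k ≤ n`. -/
theorem replica_ops_infix_of_group_ops {α : Type*} (ops rops : ℕ → List α)
    (i k : ℕ) (hik : i < k)
    (h₁ : rops i <:+ ops i)
    (h₂ : ∀ j, i < j → j < k → rops j = ops j)
    (h₃ : rops k <+: ops k) :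
    ∀ m n : ℕ, m ≤ i → k ≤ n →
      ((List.Ico i (k + 1)).map rops).flatten <:+:
        ((List.Ico m (n + 1)).map ops).flatten := by
  intro m n hmi hkn
  obtain ⟨s, hs⟩ := h₁
  obtain ⟨t, ht⟩ := h₃
  have hmid : (List.Ico (i+1) k).map rops = (List.Ico (i+1) k).map ops := by
    apply List.map_congr_left
    intro j hj
    rw [List.Ico.mem] at hj
    exact h₂ j hj.1 hj.2
  -- decompose the rops window
  have hr : List.Ico i (k+1) = [i] ++ List.Ico (i+1) k ++ [k] := by
    rw [← List.Ico.succ_singleton, ← List.Ico.succ_singleton,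
      List.Ico.append_consecutive (by omega) (by omega),
      List.Ico.append_consecutive (by omega) (by omega)]
  have ho : List.Ico m (n+1) =
      List.Ico m i ++ [i] ++ List.Ico (i+1) k ++ [k] ++ List.Ico (k+1) (n+1) := by
    rw [← List.Ico.append_consecutive (show m ≤ i from hmi) (show i ≤ n+1 by omega),
      ← List.Ico.append_consecutive (show i ≤ i+1 by omega) (show i+1 ≤ n+1 by omega),
      ← List.Ico.append_consecutive (show i+1 ≤ k by omega) (show k ≤ n+1 by omega),
      ← List.Ico.append_consecutive (show k ≤ k+1 by omega) (show k+1 ≤ n+1 by omega),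
      List.Ico.succ_singleton, List.Ico.succ_singleton]
    simp [List.append_assoc]
  rw [hr, ho]
  refine ⟨((List.Ico m i).map ops).flatten ++ s,
    t ++ ((List.Ico (k+1) (n+1)).map ops).flatten, ?_⟩
  simp only [List.map_append, List.flatten_append, List.map_cons, List.map_nil,
    List.flatten_cons, List.flatten_nil, hmid, ← hs, ← ht]
  simp [List.append_assoc]
end

section
/- Let states : ℕ → List σ assign to each primary view number the group's (primary's) sequence of states in that view, and let rstates : ℕ → List σ assign to each view the sequence of states taken by a particular replica. Suppose i < k and: (i) rstates i is a suffix of states i; (ii) rstates j = states j for every j with i < j < k; and (iii) rstates k is a prefix of states k. Then for every m ≤ i and every n ≥ k, the concatenation rstates i ++ rstates (i+1) ++ ⋯ ++ rstates k is an infix (contiguous subsequence) of the concatenation states m ++ states (m+1) ++ ⋯ ++ states n. -/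
/-- Theorem 4, Safety, semi-passive replication: if a replica's
state sequence in view `i` is a suffix of the group's state sequence in view `i`,
coincides with the group's state sequence in all intermediate views, and is a
prefix of the group's state sequence in view `k`, then its concatenated state
sequence over views `i..k` is an infix of the group's concatenated state sequence
over any window `m..n` with `m ≤ i` and `k ≤ n`. -/
theorem replica_states_infix_of_group_states {σ : Type*} (states rstates : ℕ → List σ)
    (i k : ℕ) (hik : i < k)
    (h₁ : rstates i <:+ states i)
    (h₂ : ∀ j, i < j → j < k → rstates j = states j)
    (h₃ : rstates k <+: states k) :
    ∀ m n : ℕ, m ≤ i → k ≤ n →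
      ((List.Ico i (k + 1)).map rstates).flatten <:+:
        ((List.Ico m (n + 1)).map states).flatten := by
  intro m n hmi hkn
  obtain ⟨s, hs⟩ := h₁
  obtain ⟨t, ht⟩ := h₃
  have hmid : (List.Ico (i+1) k).map rstates = (List.Ico (i+1) k).map states := by
    apply List.map_congr_left
    intro j hj
    rw [List.Ico.mem] at hj
    exact h₂ j hj.1 hj.2
  have hsplit : List.Ico i (k+1) = i :: (List.Ico (i+1) k ++ [k]) := by
    rw [List.Ico.eq_cons (by omega), List.Ico.succ_top (by omega)]
  have hsplit2 : List.Ico m (n+1) =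
      List.Ico m i ++ ((i :: (List.Ico (i+1) k ++ [k])) ++ List.Ico (k+1) (n+1)) := by
    rw [← hsplit, List.Ico.append_consecutive (by omega) (by omega),
      List.Ico.append_consecutive hmi (by omega)]
  rw [hsplit, hsplit2]
  refine ⟨((List.Ico m i).map states).flatten ++ s,
    t ++ ((List.Ico (k+1) (n+1)).map states).flatten, ?_⟩
  simp only [List.map_cons, List.map_append, List.flatten_cons, List.flatten_append,
    List.map_cons, List.flatten_cons, hmid, hs, ht]
  simp [← hs, ← ht]
end
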